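/- Let G be an Eulerian digraph with sink. A chip configuration σ on G is superstable if and only if the configuration δ − 1 − σ is recurrent, where δ(v) = d_v and 1 is the all-ones configuration. -/

import Mathlib

/-!
Superstable configurations are dual to recurrent ones on an Eulerian digraph with
sink (Holroyd et al., Theorem 4.4): σ is superstable iff δ − 1 − σ is recurrent.
-/

/-- The out-degree of a vertex. -/
def outdeg {V E : Type} [Fintype E] [DecidableEq V] (tail : E → V) (v : V) : ℕ :=
  (Finset.univ.filter (fun e => tail e = v)).card

/-- The number of edges from `v` to `w`. -/
def numEdges {V E : Type} [Fintype E] [DecidableEq V] (tail head : E → V) (v w : V) : ℕ :=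
  (Finset.univ.filter (fun e => tail e = v ∧ head e = w)).card

/-- The vertices other than the (global) sink `s`. -/
abbrev Vne {V : Type} (s : V) : Type := {v : V // v ≠ s}

/-- Firing the vertex `v`. -/
def fire {V E : Type} [Fintype E] [DecidableEq V] {s : V} (tail head : E → V)
    (σ : Vne s → ℕ) (v : Vne s) : Vne s → ℕ :=
  fun w =>
    if w = v then σ v + numEdges tail head v.1 v.1 - outdeg tail v.1
    else σ w + numEdges tail head v.1 w.1

/-- A (non-sink) vertex is active when it has at least as many chips as outgoing edges. -/
def Active {V E : Type} [Fintype E] [DecidableEq V] {s : V} (tail : E → V)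
    (σ : Vne s → ℕ) (v : Vne s) : Prop :=
  outdeg tail v.1 ≤ σ v

/-- The result of firing the vertices in the list `l` in order, starting from `σ`. -/
def fireList {V E : Type} [Fintype E] [DecidableEq V] {s : V} (tail head : E → V)
    (σ : Vne s → ℕ) : List (Vne s) → (Vne s → ℕ)
  | [] => σ
  | v :: l => fireList tail head (fire tail head σ v) l

/-- The firing sequence `l` is legal from `σ`. -/
def Legal {V E : Type} [Fintype E] [DecidableEq V] {s : V} (tail head : E → V)
    (σ : Vne s → ℕ) : List (Vne s) → Prop
  | [] => True
  | v :: l => Active tail σ v ∧ Legal tail head (fire tail head σ v) l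

/-- A configuration is stable when no non-sink vertex is active. -/
def Stable {V E : Type} [Fintype E] [DecidableEq V] {s : V} (tail : E → V)
    (σ : Vne s → ℕ) : Prop :=
  ∀ v, σ v < outdeg tail v.1

/-- `σ` is accessible: from any chip configuration `ζ` one can obtain `σ` by adding
some chips and then performing a legal sequence of firings of active vertices. -/
def Accessible {V E : Type} [Fintype E] [DecidableEq V] {s : V} (tail head : E → V)
    (σ : Vne s → ℕ) : Prop :=
  ∀ ζ : Vne s → ℕ, ∃ (β : Vne s → ℕ) (l : List (Vne s)),
    Legal tail head (fun v => ζ v + β v) l ∧ fireList tail head (fun v => ζ v + β v) l = σ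

/-- A chip configuration is recurrent when it is both stable and accessible. -/
def Recurrent {V E : Type} [Fintype E] [DecidableEq V] {s : V} (tail head : E → V)
    (σ : Vne s → ℕ) : Prop :=
  Stable tail σ ∧ Accessible tail head σ

/-- The reduced Laplacian of the digraph. -/
def reducedLaplacian {V E : Type} [Fintype E] [DecidableEq V] (tail head : E → V)
    (s : V) : Matrix (Vne s) (Vne s) ℤ :=
  fun i j => (if i = j then (outdeg tail i.1 : ℤ) else 0) - (numEdges tail head i.1 j.1 : ℤ)

/-- The integer row span of the reduced Laplacian. -/
def rowSpan {V E : Type} [Fintype E] [DecidableEq V] (tail head : E → V) (s : V) :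
    Submodule ℤ (Vne s → ℤ) :=
  Submodule.span ℤ (Set.range (fun i => reducedLaplacian tail head s i))

/-- The in-degree of a vertex. -/
def indeg {V E : Type} [Fintype E] [DecidableEq V] (head : E → V) (v : V) : ℕ :=
  (Finset.univ.filter (fun e => head e = v)).card

/-- The nonempty cluster `A` of non-sink vertices is allowed to fire from `σ`:
the cluster-firing `σ − Σ_{i ∈ A} Δ'_i` is nonnegative at every vertex. -/
def ClusterAllowed {V E : Type} [Fintype V] [Fintype E] [DecidableEq V] {s : V}
    (tail head : E → V) (σ : Vne s → ℕ) (A : Finset (Vne s)) : Prop :=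
  ∀ j : Vne s, (0 : ℤ) ≤ (σ j : ℤ) - ∑ i ∈ A, reducedLaplacian tail head s i j

/-- A chip configuration is superstable when no nonempty cluster is allowed to fire. -/
def Superstable {V E : Type} [Fintype V] [Fintype E] [DecidableEq V] {s : V}
    (tail head : E → V) (σ : Vne s → ℕ) : Prop :=
  ∀ A : Finset (Vne s), A.Nonempty → ¬ ClusterAllowed tail head σ A

/-!
Put `τ = δ − 1 − σ`. A cluster `A` may fire from `σ` exactly when every `v ∈ A` receives more
than `τ v` edges from `A`, so `σ` is superstable iff `τ` has the burning property: every nonempty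
cluster contains a vertex receiving at most `τ v` edges from it. A recurrent `τ` has it: fire
from `δ + β` down to `τ` and look at the vertex of `A` whose last firing comes last.
Conversely, if `τ` has the burning property, one can fire legally from `τ + x Δ'` (`x ≥ 0`) down
to `τ`, always firing a vertex of maximal `x`, which the burning property together with
`indeg ≤ outdeg` makes active. As every vertex reaches the sink, firing sequences terminate, and
the firing vector `x` of a stabilization of `ζ + δ` satisfies `x Δ' > ζ`; starting from
`τ + x Δ' ≥ ζ` proves `τ` accessible.
-/

open Finset Matrix

section EdgeCounts

variable {V E : Type} [Fintype V] [DecidableEq V] [Fintype E] (tail head : E → V)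

theorem sum_numEdges_eq_outdeg (v : V) : ∑ w, numEdges tail head v w = outdeg tail v := by
  rw [outdeg, card_eq_sum_card_fiberwise (f := head) (t := univ) fun e _ => mem_univ _]
  simp only [numEdges, filter_filter]

theorem sum_numEdges_eq_indeg (w : V) : ∑ v, numEdges tail head v w = indeg head w := by
  rw [indeg, card_eq_sum_card_fiberwise (f := tail) (t := univ) fun e _ => mem_univ _]
  simp only [numEdges, filter_filter, and_comm]

theorem sum_numEdges_subtype_le_indeg (s w : V) :
    ∑ v : Vne s, numEdges tail head v.1 w ≤ indeg head w := by
  rw [← sum_numEdges_eq_indeg, Fintype.sum_eq_add_sum_subtype_ne _ s]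
  exact Nat.le_add_left _ _

end EdgeCounts

section Laplacian

variable {V E : Type} [Fintype V] [DecidableEq V] [Fintype E] (tail head : E → V) (s : V)

local notation "Δ'" => reducedLaplacian tail head s

theorem sum_reducedLaplacian_row (v : Vne s) : ∑ w, Δ' v w = numEdges tail head v.1 s := by
  have h := sum_numEdges_eq_outdeg tail head v.1
  rw [Fintype.sum_eq_add_sum_subtype_ne _ s] at h
  simp only [reducedLaplacian, sum_sub_distrib, sum_ite_eq, mem_univ, if_true, ← h]
  push_cast
  ring

theorem vecMul_reducedLaplacian_apply (x : Vne s → ℤ) (w : Vne s) :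
    (x ᵥ* Δ') w = x w * outdeg tail w.1 - ∑ v, x v * numEdges tail head v.1 w.1 := by
  simp only [vecMul_apply_eq_sum, reducedLaplacian, mul_sub, sum_sub_distrib, mul_ite, mul_zero,
    sum_ite_eq', mem_univ, if_true]

theorem sum_vecMul_reducedLaplacian (x : Vne s → ℤ) :
    ∑ w, (x ᵥ* Δ') w = ∑ v, x v * numEdges tail head v.1 s := by
  simp only [vecMul_apply_eq_sum]
  rw [sum_comm]
  simp only [← mul_sum, sum_reducedLaplacian_row]

end Laplacian

section Firing

variable {V E : Type} [DecidableEq V] [Fintype E] (tail head : E → V) {s : V}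

local notation "Δ'" => reducedLaplacian tail head s

theorem fire_apply_of_active {σ : Vne s → ℕ} {v : Vne s} (hv : Active tail σ v) (w : Vne s) :
    (fire tail head σ v w : ℤ) = σ w - Δ' v w := by
  unfold Active at hv
  by_cases h : w = v
  · subst h
    simp only [fire, reducedLaplacian, if_true]
    push_cast [Nat.le_add_right_of_le hv]
    ring
  · simp [fire, reducedLaplacian, h, Ne.symm h]

theorem fireList_append (σ : Vne s → ℕ) (l₁ l₂ : List (Vne s)) :
    fireList tail head σ (l₁ ++ l₂) = fireList tail head (fireList tail head σ l₁) l₂ := by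
  induction l₁ generalizing σ with
  | nil => rfl
  | cons u l ih => exact ih _

theorem legal_append_iff {σ : Vne s → ℕ} {l₁ l₂ : List (Vne s)} :
    Legal tail head σ (l₁ ++ l₂) ↔
      Legal tail head σ l₁ ∧ Legal tail head (fireList tail head σ l₁) l₂ := by
  induction l₁ generalizing σ with
  | nil => simp [Legal, fireList]
  | cons u l ih => simp only [List.cons_append, Legal, fireList, ih, and_assoc]

theorem count_cons_eq_add_ite (u v : Vne s) (l : List (Vne s)) :
    (u :: l).count v = l.count v + if v = u then 1 else 0 := by
  by_cases h : v = u
  · simp [h]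
  · simp [List.count_cons_of_ne (Ne.symm h), h]

theorem count_cons_cast_eq_add_single (u : Vne s) (l : List (Vne s)) :
    (fun v => ((u :: l).count v : ℤ)) = (fun v => (l.count v : ℤ)) + Pi.single u 1 := by
  funext v
  simp [count_cons_eq_add_ite, Pi.single_apply]

variable [Fintype V]

theorem fireList_apply_of_legal {σ : Vne s → ℕ} {l : List (Vne s)} (hl : Legal tail head σ l)
    (w : Vne s) :
    (fireList tail head σ l w : ℤ) = σ w - ((fun v => (l.count v : ℤ)) ᵥ* Δ') w := by
  induction l generalizing σ with
  | nil => simp [fireList, vecMul_apply_eq_sum]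
  | cons u l ih =>
    rw [fireList, ih hl.2, fire_apply_of_active tail head hl.1, count_cons_cast_eq_add_single,
      add_vecMul, single_one_vecMul]
    simp only [Pi.add_apply, row_apply]
    ring

theorem fireList_apply_of_not_mem {σ : Vne s → ℕ} {l : List (Vne s)} {v : Vne s} (hv : v ∉ l) :
    fireList tail head σ l v = σ v + ∑ u, l.count u * numEdges tail head u.1 v.1 := by
  induction l generalizing σ with
  | nil => simp [fireList]
  | cons u l ih =>
    obtain ⟨hvu, hvl⟩ := not_or.mp (List.mem_cons.not.mp hv)
    rw [fireList, ih hvl, fire, if_neg hvu]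
    simp only [count_cons_eq_add_ite, add_mul, sum_add_distrib, ite_mul, one_mul, zero_mul,
      sum_ite_eq', mem_univ, if_true]
    ring

theorem length_eq_sum_count (l : List (Vne s)) : l.length = ∑ v, l.count v := by
  induction l with
  | nil => simp
  | cons u l ih => simp [count_cons_eq_add_ite, sum_add_distrib, ← ih]

end Firing

section Cluster

variable {V E : Type} [DecidableEq V] [Fintype E] {tail head : E → V} {s : V}

variable (tail head) in
def numEdgesFrom (A : Finset (Vne s)) (v : Vne s) : ℕ := ∑ u ∈ A, numEdges tail head u.1 v.1

variable (tail head) in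
def BurningProperty (τ : Vne s → ℕ) : Prop :=
  ∀ A : Finset (Vne s), A.Nonempty → ∃ v ∈ A, numEdgesFrom tail head A v ≤ τ v

variable (tail head) in
theorem sum_reducedLaplacian_cluster (A : Finset (Vne s)) (j : Vne s) :
    ∑ i ∈ A, reducedLaplacian tail head s i j =
      (if j ∈ A then (outdeg tail j.1 : ℤ) else 0) - numEdgesFrom tail head A j := by
  simp only [reducedLaplacian, sum_sub_distrib, sum_ite_eq', numEdgesFrom, Nat.cast_sum]

variable [Fintype V]

theorem clusterAllowed_iff {σ : Vne s → ℕ} {A : Finset (Vne s)} :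
    ClusterAllowed tail head σ A ↔
      ∀ j ∈ A, outdeg tail j.1 ≤ σ j + numEdgesFrom tail head A j := by
  simp only [ClusterAllowed, sum_reducedLaplacian_cluster]
  refine ⟨fun h j hj => ?_, fun h j => ?_⟩
  · have := h j
    rw [if_pos hj] at this
    omega
  · by_cases hj : j ∈ A
    · have := h j hj
      rw [if_pos hj]
      omega
    · rw [if_neg hj]
      omega

theorem superstable_iff_burningProperty {σ τ : Vne s → ℕ}
    (hστ : ∀ v, σ v + τ v + 1 = outdeg tail v.1) :
    Superstable tail head σ ↔ BurningProperty tail head τ := by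
  simp only [Superstable, BurningProperty, clusterAllowed_iff, not_forall, not_le, exists_prop]
  exact forall₂_congr fun A _ => exists_congr fun v => and_congr_right fun _ => by
    have := hστ v
    omega

theorem Superstable.lt_outdeg {σ : Vne s → ℕ} (h : Superstable tail head σ) (v : Vne s) :
    σ v < outdeg tail v.1 := by
  have := h {v} (singleton_nonempty v)
  simp only [clusterAllowed_iff, forall_eq, mem_singleton] at this
  omega

end Cluster

theorem List.exists_eq_append_cons_of_forall_mem {α : Type*} {A : Finset α} (hA : A.Nonempty) :
    ∀ {l : List α}, (∀ u ∈ A, u ∈ l) →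
      ∃ l₁ v l₂, l = l₁ ++ v :: l₂ ∧ v ∈ A ∧ v ∉ l₂ ∧ ∀ u ∈ A, u ≠ v → u ∈ l₂
  | [], hl => absurd (hl _ hA.choose_spec) List.not_mem_nil
  | w :: l, hl => by
    by_cases hAl : ∀ u ∈ A, u ∈ l
    · obtain ⟨l₁, v, l₂, rfl, hv⟩ := exists_eq_append_cons_of_forall_mem hA hAl
      exact ⟨w :: l₁, v, l₂, rfl, hv⟩
    · simp only [not_forall, exists_prop] at hAl
      obtain ⟨u, huA, hul⟩ := hAl
      obtain rfl : u = w := (List.mem_cons.mp (hl u huA)).resolve_right hul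
      exact ⟨[], u, l, rfl, huA, hul, fun u' hu' hne =>
        (List.mem_cons.mp (hl u' hu')).resolve_left hne⟩

section Recurrence

variable {V E : Type} [Fintype V] [DecidableEq V] [Fintype E] {tail head : E → V} {s : V}

theorem numEdgesFrom_le_fireList_fire {σ : Vne s → ℕ} {A : Finset (Vne s)} {v : Vne s}
    {l : List (Vne s)} (hv : Active tail σ v) (hvA : v ∈ A) (hvl : v ∉ l)
    (hAl : ∀ u ∈ A, u ≠ v → u ∈ l) :
    numEdgesFrom tail head A v ≤ fireList tail head (fire tail head σ v) l v := by
  rw [fireList_apply_of_not_mem tail head hvl, numEdgesFrom, ← add_sum_erase A _ hvA]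
  refine add_le_add ?_ ?_
  · unfold Active at hv
    simp only [fire, if_true]
    omega
  · calc ∑ u ∈ A.erase v, numEdges tail head u.1 v.1
        ≤ ∑ u ∈ A.erase v, l.count u * numEdges tail head u.1 v.1 :=
          sum_le_sum fun u hu => Nat.le_mul_of_pos_left _ <| List.count_pos_iff.mpr <|
            hAl u (mem_of_mem_erase hu) (ne_of_mem_erase hu)
      _ ≤ ∑ u, l.count u * numEdges tail head u.1 v.1 := sum_le_sum_of_subset (subset_univ _)

theorem Recurrent.burningProperty {τ : Vne s → ℕ} (h : Recurrent tail head τ) :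
    BurningProperty tail head τ := by
  obtain ⟨hst, hacc⟩ := h
  intro A hA
  obtain ⟨β, l, hl, hend⟩ := hacc fun v => outdeg tail v.1
  have hAl : ∀ u ∈ A, u ∈ l := fun u _ => by
    by_contra hul
    have := fireList_apply_of_not_mem tail head (σ := fun v => outdeg tail v.1 + β v) hul
    rw [hend] at this
    have := hst u
    omega
  obtain ⟨l₁, v, l₂, rfl, hvA, hvl₂, hAl₂⟩ := List.exists_eq_append_cons_of_forall_mem hA hAl
  rw [legal_append_iff] at hl
  rw [fireList_append] at hend
  exact ⟨v, hvA, hend ▸ numEdgesFrom_le_fireList_fire hl.2.1 hvA hvl₂ hAl₂⟩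

end Recurrence

section Schedule

variable {V E : Type} [Fintype V] [DecidableEq V] [Fintype E] {tail head : E → V} {s : V}

local notation "Δ'" => reducedLaplacian tail head s

theorem exists_active_of_burningProperty (heul : ∀ v : V, v ≠ s → indeg head v ≤ outdeg tail v)
    {τ : Vne s → ℕ} (hB : BurningProperty tail head τ) {x : Vne s → ℕ} (hx : x ≠ 0) :
    ∃ v, 0 < x v ∧ (outdeg tail v.1 : ℤ) ≤ τ v + ((fun u => (x u : ℤ)) ᵥ* Δ') v := by
  obtain ⟨u₀, hu₀⟩ := Function.ne_iff.mp hx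
  obtain ⟨m, -, hm⟩ := exists_max_image univ x ⟨u₀, mem_univ _⟩
  obtain ⟨k, hk⟩ : ∃ k, x m = k + 1 :=
    Nat.exists_eq_add_one.mpr (lt_of_lt_of_le (Nat.pos_of_ne_zero hu₀) (hm u₀ (mem_univ _)))
  obtain ⟨v, hvA, hv⟩ := hB (univ.filter fun u => x u = k + 1) ⟨m, by simpa using hk⟩
  rw [mem_filter] at hvA
  have hpt : ∀ u, x u * numEdges tail head u.1 v.1 ≤
      k * numEdges tail head u.1 v.1 + if x u = k + 1 then numEdges tail head u.1 v.1 else 0 := by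
    intro u
    split_ifs with hu
    · rw [hu, add_mul, one_mul]
    · have : x u ≤ k := by have := hm u (mem_univ _); omega
      simpa using Nat.mul_le_mul_right _ this
  have hin : ∑ u, x u * numEdges tail head u.1 v.1 ≤ k * outdeg tail v.1 + τ v :=
    calc ∑ u, x u * numEdges tail head u.1 v.1
        ≤ k * ∑ u : Vne s, numEdges tail head u.1 v.1 + numEdgesFrom tail head _ v := by
          simpa only [numEdgesFrom, sum_add_distrib, ← mul_sum, ← sum_filter] using
            sum_le_sum fun u _ => hpt u
      _ ≤ k * outdeg tail v.1 + τ v := by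
          gcongr
          exact (sum_numEdges_subtype_le_indeg tail head s v.1).trans (heul v.1 v.2)
  refine ⟨v, by omega, ?_⟩
  rw [vecMul_reducedLaplacian_apply, hvA.2]
  have : ((∑ u, x u * numEdges tail head u.1 v.1 : ℕ) : ℤ) ≤ k * outdeg tail v.1 + τ v := by
    exact_mod_cast hin
  push_cast at this ⊢
  linarith

theorem exists_legal_fireList_eq_of_burningProperty
    (heul : ∀ v : V, v ≠ s → indeg head v ≤ outdeg tail v)
    {τ : Vne s → ℕ} (hB : BurningProperty tail head τ) (x : Vne s → ℕ) {γ : Vne s → ℕ}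
    (hγ : ∀ w, (γ w : ℤ) = τ w + ((fun u => (x u : ℤ)) ᵥ* Δ') w) :
    ∃ l, Legal tail head γ l ∧ fireList tail head γ l = τ := by
  generalize hn : ∑ u, x u = n
  induction n generalizing x γ with
  | zero =>
    have hx : x = 0 := funext fun u => sum_eq_zero_iff.mp hn u (mem_univ u)
    refine ⟨[], trivial, funext fun w => ?_⟩
    have := hγ w
    simp only [hx, Pi.zero_apply, Nat.cast_zero, vecMul_apply_eq_sum, zero_mul, sum_const_zero,
      add_zero] at this
    exact_mod_cast this
  | succ n ih =>
    obtain ⟨v, hxv, hv⟩ := exists_active_of_burningProperty heul hB (x := x) (by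
      rintro rfl
      simp at hn)
    have hact : Active tail γ v := by
      unfold Active
      have := hγ v
      omega
    set x' := Function.update x v (x v - 1)
    have hx' : (fun u => (x' u : ℤ)) = (fun u => (x u : ℤ)) - Pi.single v 1 := by
      funext u
      by_cases hu : u = v
      · subst hu
        simp [x']
        omega
      · simp [x', hu]
    obtain ⟨l, hl, hend⟩ := ih x' (γ := fire tail head γ v) (fun w => by
      rw [fire_apply_of_active tail head hact, hγ, hx', sub_vecMul, single_one_vecMul]
      simp only [Pi.sub_apply, row_apply]
      ring) (by
      have := congrArg (fun f => ∑ u, f u) hx'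
      simp only [Pi.sub_apply, sum_sub_distrib, sum_pi_single', mem_univ, if_true] at this
      push_cast [← Nat.cast_sum, hn] at this
      omega)
    exact ⟨v :: l, ⟨hact, hl⟩, hend⟩

end Schedule

section Termination

variable {V E : Type} [Fintype V] [DecidableEq V] [Fintype E] {tail head : E → V} {s : V}

local notation "Δ'" => reducedLaplacian tail head s

theorem sum_fireList_add_sum_count_mul_numEdges_sink {γ : Vne s → ℕ} {l : List (Vne s)}
    (hl : Legal tail head γ l) :
    ∑ w, fireList tail head γ l w + ∑ v, l.count v * numEdges tail head v.1 s = ∑ w, γ w := by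
  have hfire : ∑ w, (fireList tail head γ l w : ℤ) =
      ∑ w, (γ w : ℤ) - ∑ w, ((fun v => (l.count v : ℤ)) ᵥ* Δ') w := by
    rw [← sum_sub_distrib]
    exact sum_congr rfl fun w _ => fireList_apply_of_legal tail head hl w
  rw [sum_vecMul_reducedLaplacian] at hfire
  zify
  linarith

theorem count_mul_numEdges_sink_le {γ : Vne s → ℕ} {l : List (Vne s)}
    (hl : Legal tail head γ l) (u : Vne s) :
    l.count u * numEdges tail head u.1 s ≤ ∑ w, γ w := by
  rw [← sum_fireList_add_sum_count_mul_numEdges_sink hl]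
  exact (single_le_sum (f := fun v => l.count v * numEdges tail head v.1 s)
    (fun v _ => Nat.zero_le _) (mem_univ u)).trans (Nat.le_add_left _ _)

theorem count_mul_numEdges_le {γ : Vne s → ℕ} {l : List (Vne s)}
    (hl : Legal tail head γ l) (u w : Vne s) :
    l.count u * numEdges tail head u.1 w.1 ≤ ∑ w, γ w + l.count w * outdeg tail w.1 := by
  have hfinal : fireList tail head γ l w ≤ ∑ w, γ w := by
    rw [← sum_fireList_add_sum_count_mul_numEdges_sink hl]
    exact (single_le_sum (fun v _ => Nat.zero_le _) (mem_univ w)).trans (Nat.le_add_right _ _)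
  have hu : l.count u * numEdges tail head u.1 w.1 ≤
      ∑ v, l.count v * numEdges tail head v.1 w.1 :=
    single_le_sum (f := fun v => l.count v * numEdges tail head v.1 w.1)
      (fun v _ => Nat.zero_le _) (mem_univ u)
  have hw := fireList_apply_of_legal tail head hl w
  rw [vecMul_reducedLaplacian_apply] at hw
  zify at hfinal hu ⊢
  linarith

/-- Each firing of `v` sends a chip along the first edge of a path to the sink; that edge ends
at the sink or at a vertex whose firings are already bounded, and either absorbs only boundedly
many chips. -/
theorem exists_count_le_of_reflTransGen (γ : Vne s → ℕ) {v : V}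
    (hv : Relation.ReflTransGen (fun a b => ∃ e, tail e = a ∧ head e = b) v s) :
    ∃ B, ∀ l, Legal tail head γ l → ∀ hvs : v ≠ s, l.count ⟨v, hvs⟩ ≤ B := by
  induction hv using Relation.ReflTransGen.head_induction_on with
  | refl => exact ⟨0, fun _ _ h => absurd rfl h⟩
  | head hvw _ ih =>
    obtain ⟨e, rfl, rfl⟩ := hvw
    obtain ⟨B, hB⟩ := ih
    refine ⟨∑ w, γ w + B * outdeg tail (head e), fun l hl hvs => ?_⟩
    have he : 0 < numEdges tail head (tail e) (head e) := card_pos.mpr ⟨e, by simp⟩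
    by_cases hes : head e = s
    · calc l.count ⟨tail e, hvs⟩
          ≤ l.count ⟨tail e, hvs⟩ * numEdges tail head (tail e) s :=
            Nat.le_mul_of_pos_right _ (hes ▸ he)
        _ ≤ ∑ w, γ w := count_mul_numEdges_sink_le hl _
        _ ≤ _ := Nat.le_add_right _ _
    · calc l.count ⟨tail e, hvs⟩
          ≤ l.count ⟨tail e, hvs⟩ * numEdges tail head (tail e) (head e) :=
            Nat.le_mul_of_pos_right _ he
        _ ≤ ∑ w, γ w + l.count ⟨head e, hes⟩ * outdeg tail (head e) :=
            count_mul_numEdges_le hl _ ⟨head e, hes⟩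
        _ ≤ _ := by gcongr; exact hB l hl hes

theorem exists_forall_legal_length_le
    (hglobal : ∀ v : V, Relation.ReflTransGen (fun a b => ∃ e, tail e = a ∧ head e = b) v s)
    (γ : Vne s → ℕ) : ∃ L, ∀ l, Legal tail head γ l → l.length ≤ L := by
  choose B hB using fun v : Vne s => exists_count_le_of_reflTransGen γ (hglobal v.1)
  exact ⟨∑ v, B v, fun l hl =>
    (length_eq_sum_count l).trans_le (sum_le_sum fun v _ => hB v l hl v.2)⟩

theorem exists_legal_stable
    (hglobal : ∀ v : V, Relation.ReflTransGen (fun a b => ∃ e, tail e = a ∧ head e = b) v s)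
    (γ : Vne s → ℕ) : ∃ l, Legal tail head γ l ∧ Stable tail (fireList tail head γ l) := by
  obtain ⟨L, hL⟩ := exists_forall_legal_length_le hglobal γ
  induction L generalizing γ with
  | zero =>
    refine ⟨[], trivial, fun v => not_le.mp fun hv => ?_⟩
    simpa using hL [v] ⟨hv, trivial⟩
  | succ L ih =>
    by_cases hst : Stable tail γ
    · exact ⟨[], trivial, hst⟩
    · obtain ⟨v, hv⟩ : ∃ v, Active tail γ v := by simpa [Stable, Active] using hst
      obtain ⟨l, hl, hstab⟩ := ih (fire tail head γ v) fun l hl =>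
        Nat.le_of_succ_le_succ (hL (v :: l) ⟨hv, hl⟩)
      exact ⟨v :: l, ⟨hv, hl⟩, hstab⟩

theorem exists_lt_vecMul_reducedLaplacian
    (hglobal : ∀ v : V, Relation.ReflTransGen (fun a b => ∃ e, tail e = a ∧ head e = b) v s)
    (ζ : Vne s → ℕ) : ∃ x : Vne s → ℕ, ∀ w, (ζ w : ℤ) < ((fun u => (x u : ℤ)) ᵥ* Δ') w := by
  obtain ⟨l, hl, hst⟩ := exists_legal_stable hglobal fun v => ζ v + outdeg tail v.1
  refine ⟨fun v => l.count v, fun w => ?_⟩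
  beta_reduce
  have hw := fireList_apply_of_legal tail head hl w
  have := hst w
  push_cast at hw
  omega

theorem accessible_of_burningProperty (heul : ∀ v : V, v ≠ s → indeg head v ≤ outdeg tail v)
    (hglobal : ∀ v : V, Relation.ReflTransGen (fun a b => ∃ e, tail e = a ∧ head e = b) v s)
    {τ : Vne s → ℕ} (hB : BurningProperty tail head τ) : Accessible tail head τ := by
  intro ζ
  obtain ⟨x, hx⟩ := exists_lt_vecMul_reducedLaplacian hglobal ζ
  set y := (fun u => (x u : ℤ)) ᵥ* Δ'
  have hγ : ∀ w, ((τ w + (y w).toNat : ℕ) : ℤ) = τ w + y w := fun w => by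
    have := hx w
    push_cast
    omega
  obtain ⟨l, hl, hend⟩ := exists_legal_fireList_eq_of_burningProperty heul hB x hγ
  refine ⟨fun w => τ w + (y w).toNat - ζ w, l, ?_⟩
  have hζ : (fun w => ζ w + (τ w + (y w).toNat - ζ w)) = fun w => τ w + (y w).toNat :=
    funext fun w => by have := hx w; omega
  exact hζ ▸ ⟨hl, hend⟩

end Termination

theorem superstable_iff_recurrent_complement_general
    {V E : Type} [Fintype V] [DecidableEq V] [Fintype E]
    (tail head : E → V)
    (s : V)
    (heul : ∀ v : V, v ≠ s → indeg head v ≤ outdeg tail v)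
    (hglobal : ∀ v : V,
      Relation.ReflTransGen (fun a b => ∃ e, tail e = a ∧ head e = b) v s)
    (σ : Vne s → ℕ) :
    Superstable tail head σ ↔
      ∃ τ : Vne s → ℕ, Recurrent tail head τ ∧
        ∀ v : Vne s, σ v + τ v + 1 = outdeg tail v.1 := by
  constructor
  · intro hσ
    have hστ : ∀ v, σ v + (outdeg tail v.1 - σ v - 1) + 1 = outdeg tail v.1 := fun v => by
      have := hσ.lt_outdeg v
      omega
    have hB := (superstable_iff_burningProperty hστ).mp hσ
    refine ⟨_, ⟨fun v => ?_, accessible_of_burningProperty heul hglobal hB⟩, hστ⟩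
    have := hσ.lt_outdeg v
    omega
  · rintro ⟨τ, hτ, hστ⟩
    exact (superstable_iff_burningProperty hστ).mpr hτ.burningProperty

/-- **Superstable = δ − 1 − recurrent.**  Let `G` be an Eulerian digraph with sink.
A chip configuration `σ` is superstable if and only if `δ − 1 − σ` is a (nonnegative)
recurrent chip configuration, where `δ(v) = d_v` and `1` is the all-ones
configuration; i.e. iff there is a recurrent configuration `τ` with
`σ(v) + τ(v) + 1 = d_v` for every non-sink vertex `v`. -/
theorem superstable_iff_recurrent_complement
    {V E : Type} [Fintype V] [DecidableEq V] [Fintype E]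
    (tail head : E → V)
    (s : V) (hs : outdeg tail s = 0)
    (heul : ∀ v : V, v ≠ s → indeg head v ≤ outdeg tail v)
    (hglobal : ∀ v : V,
      Relation.ReflTransGen (fun a b => ∃ e, tail e = a ∧ head e = b) v s)
    (σ : Vne s → ℕ) :
    Superstable tail head σ ↔
      ∃ τ : Vne s → ℕ, Recurrent tail head τ ∧
        ∀ v : Vne s, σ v + τ v + 1 = outdeg tail v.1 :=
  superstable_iff_recurrent_complement_general tail head s heul hglobal σ
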